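/- Monotonicity of Exposure with respect to weight: if Γ is well-formed and Γ ⊢ T ⇑ T', then weight(Γ, T) ≥ weight(Γ, T'). -/

import Mathlib

/-- Types of D<: -/
inductive Ty : Type where
  | top : Ty
  | bot : Ty
  | decl (A : ℕ) (S U : Ty) : Ty        -- {A : S..U}
  | sel (x : ℕ) (A : ℕ) : Ty            -- x.A
  | all (x : ℕ) (S T : Ty) : Ty         -- ∀(x:S)T
deriving DecidableEq

/-- Terms of D<: (ANF) -/
inductive Tm : Type where
  | var (x : ℕ) : Tm
  | tag (A : ℕ) (T : Ty) : Tm           -- {A = T}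
  | lam (x : ℕ) (T : Ty) (t : Tm) : Tm
  | app (x y : ℕ) : Tm
  | lett (x : ℕ) (t u : Tm) : Tm
deriving DecidableEq

/-- Free variables of a type. -/
def Ty.fv : Ty → Finset ℕ
  | .top => ∅
  | .bot => ∅
  | .decl _ S U => S.fv ∪ U.fv
  | .sel x _ => {x}
  | .all x S T => S.fv ∪ (T.fv \ {x})

/-- Substitution of variable y for variable z in a type: [z := y]T. -/
def Ty.substV : Ty → ℕ → ℕ → Ty
  | .top, _, _ => .top
  | .bot, _, _ => .bot
  | .decl A S U, z, y => .decl A (S.substV z y) (U.substV z y)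
  | .sel x A, z, y => .sel (if x = z then y else x) A
  | .all x S T, z, y => .all x (S.substV z y) (if x = z then T else T.substV z y)

/-- Size of a type. -/
def Ty.size : Ty → ℕ
  | .top => 1
  | .bot => 1
  | .decl _ S U => 1 + S.size + U.size
  | .sel _ _ => 1
  | .all _ S T => 1 + S.size + T.size

/-- Type environments; the head is the most recently bound variable. -/
abbrev Env := List (ℕ × Ty)

def lookupE : Env → ℕ → Option Ty
  | [], _ => none
  | (y, T) :: Γ, x => if x = y then some T else lookupE Γ x

/-- Well-formed environments. -/
inductive WfEnv : Env → Prop where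
  | nil : WfEnv []
  | cons {Γ x T} : WfEnv Γ → lookupE Γ x = none → x ∉ T.fv → WfEnv ((x, T) :: Γ)

/-- Whether a type is a path-dependent type. -/
def Ty.isSel : Ty → Prop
  | .sel _ _ => True
  | _ => False

mutual
/-- Declarative D<: subtyping. -/
inductive Subty : Env → Ty → Ty → Prop where
  | bot {Γ T} : Subty Γ .bot T
  | top {Γ S} : Subty Γ S .top
  | refl {Γ T} : Subty Γ T T
  | trans {Γ S T U} : Subty Γ S T → Subty Γ T U → Subty Γ S U
  | typ {Γ A S₁ T₁ S₂ T₂} : Subty Γ S₂ S₁ → Subty Γ T₁ T₂ →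
      Subty Γ (.decl A S₁ T₁) (.decl A S₂ T₂)
  | selLow {Γ x A S T} : Typ Γ (.var x) (.decl A S T) → Subty Γ S (.sel x A)
  | selHigh {Γ x A S T} : Typ Γ (.var x) (.decl A S T) → Subty Γ (.sel x A) T
  | all {Γ x S₁ T₁ S₂ T₂} : Subty Γ S₂ S₁ → Subty ((x, S₂) :: Γ) T₁ T₂ →
      Subty Γ (.all x S₁ T₁) (.all x S₂ T₂)

/-- Declarative D<: typing. -/
inductive Typ : Env → Tm → Ty → Prop where
  | var {Γ x T} : lookupE Γ x = some T → Typ Γ (.var x) T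
  | allI {Γ x T t U} : Typ ((x, T) :: Γ) t U → x ∉ T.fv →
      Typ Γ (.lam x T t) (.all x T U)
  | typI {Γ A T} : Typ Γ (.tag A T) (.decl A T T)
  | allE {Γ x y z S T} : Typ Γ (.var x) (.all z S T) → Typ Γ (.var y) S →
      Typ Γ (.app x y) (T.substV z y)
  | lett {Γ x t u T U} : Typ Γ t T → Typ ((x, T) :: Γ) u U → x ∉ U.fv →
      Typ Γ (.lett x t u) U
  | sub {Γ t T U} : Typ Γ t T → Subty Γ T U → Typ Γ t U
end

/-- The Exposure relation Γ ⊢ T ⇑ T'. -/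
inductive Expose : Env → Ty → Ty → Prop where
  | bot {Γ x A T} : lookupE Γ x = some T → Expose Γ T .bot →
      Expose Γ (.sel x A) .bot
  | path {Γ x A T S U V} : lookupE Γ x = some T → Expose Γ T (.decl A S U) →
      Expose Γ U V → Expose Γ (.sel x A) V
  | other {Γ T} : ¬ T.isSel → Expose Γ T T

mutual
/-- Promotion Γ ⊢ T ⇑ˣ T'. -/
inductive Promo : Env → Ty → ℕ → Ty → Prop where
  | up {Γ x A T L U} : lookupE Γ x = some T → Expose Γ T (.decl A L U) →
      Promo Γ (.sel x A) x U
  | upBot {Γ x A T} : lookupE Γ x = some T → Expose Γ T .bot →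
      Promo Γ (.sel x A) x .bot
  | lam {Γ x y S S' T T'} : Demo Γ S x S' → Promo ((y, S') :: Γ) T x T' → y ≠ x →
      Promo Γ (.all y S T) x (.all y S' T')
  | varr {Γ x y A} : y ≠ x → Promo Γ (.sel y A) x (.sel y A)
  | bot {Γ x} : Promo Γ .bot x .bot
  | top {Γ x} : Promo Γ .top x .top
  | decl {Γ x A L L' U U'} : Demo Γ L x L' → Promo Γ U x U' →
      Promo Γ (.decl A L U) x (.decl A L' U')
  | cap {Γ x S T} : Promo Γ (.all x S T) x (.all x S T)

/-- Demotion Γ ⊢ T ⇓ˣ T'. -/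
inductive Demo : Env → Ty → ℕ → Ty → Prop where
  | down {Γ x A T L U} : lookupE Γ x = some T → Expose Γ T (.decl A L U) →
      Demo Γ (.sel x A) x L
  | downBot {Γ x A T} : lookupE Γ x = some T → Expose Γ T .bot →
      Demo Γ (.sel x A) x .top
  | lam {Γ x y S S' T T'} : Promo Γ S x S' → Demo ((y, S) :: Γ) T x T' → y ≠ x →
      Demo Γ (.all y S T) x (.all y S' T')
  | varr {Γ x y A} : y ≠ x → Demo Γ (.sel y A) x (.sel y A)
  | bot {Γ x} : Demo Γ .bot x .bot
  | top {Γ x} : Demo Γ .top x .top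
  | decl {Γ x A L L' U U'} : Promo Γ L x L' → Demo Γ U x U' →
      Demo Γ (.decl A L U) x (.decl A L' U')
  | cap {Γ x S T} : Demo Γ (.all x S T) x (.all x S T)
end

/-- Step Subtyping Γ ⊢ₛ S <: T. -/
inductive SSub : Env → Ty → Ty → Prop where
  | bot {Γ T} : SSub Γ .bot T
  | top {Γ T} : SSub Γ T .top
  | typ {Γ A S₁ T₁ S₂ T₂} : SSub Γ S₂ S₁ → SSub Γ T₁ T₂ →
      SSub Γ (.decl A S₁ T₁) (.decl A S₂ T₂)
  | refl {Γ x A} : SSub Γ (.sel x A) (.sel x A)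
  | selHigh {Γ x A T S₁ S₂ U} : lookupE Γ x = some T →
      Expose Γ T (.decl A S₁ S₂) → SSub Γ S₂ U → SSub Γ (.sel x A) U
  | selLow {Γ x A T S₁ S₂ U} : lookupE Γ x = some T →
      Expose Γ T (.decl A S₁ S₂) → SSub Γ U S₁ → SSub Γ U (.sel x A)
  | botSel {Γ x A T U} : lookupE Γ x = some T → Expose Γ T .bot →
      SSub Γ U (.sel x A)
  | selBot {Γ x A T U} : lookupE Γ x = some T → Expose Γ T .bot →
      SSub Γ (.sel x A) U
  | all {Γ x S T₁ T₂} : SSub ((x, S) :: Γ) T₁ T₂ →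
      SSub Γ (.all x S T₁) (.all x S T₂)

/-- Step Typing Γ ⊢ₛ t : T. -/
inductive STyp : Env → Tm → Ty → Prop where
  | var {Γ x T} : lookupE Γ x = some T → STyp Γ (.var x) T
  | allI {Γ x T t U} : STyp ((x, T) :: Γ) t U → x ∉ T.fv →
      STyp Γ (.lam x T t) (.all x T U)
  | typI {Γ A T} : STyp Γ (.tag A T) (.decl A T T)
  | allE {Γ x y z V S T U} : STyp Γ (.var x) V → Expose Γ V (.all z S T) →
      STyp Γ (.var y) U → SSub Γ U S → STyp Γ (.app x y) (T.substV z y)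
  | appBot {Γ x y T U} : STyp Γ (.var x) T → Expose Γ T .bot →
      STyp Γ (.var y) U → STyp Γ (.app x y) .bot
  | lett {Γ x t u T U' U} : STyp Γ t T → STyp ((x, T) :: Γ) u U' →
      Promo ((x, T) :: Γ) U' x U → STyp Γ (.lett x t u) U

/-- Lookup returning also the remaining (earlier) environment Γ₁,
    for Γ = Γ₂, x:T, Γ₁. -/
inductive LookupRest : Env → ℕ → Ty → Env → Prop where
  | here {Γ x T} : LookupRest ((x, T) :: Γ) x T Γ
  | there {Γ x y T S Γ'} : x ≠ y → LookupRest Γ x T Γ' →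
      LookupRest ((y, S) :: Γ) x T Γ'

/-- The weight of a type in a context. -/
inductive Weight : Env → Ty → ℕ → Prop where
  | top {Γ} : Weight Γ .top 1
  | bot {Γ} : Weight Γ .bot 1
  | decl {Γ A S T m n} : Weight Γ S m → Weight Γ T n →
      Weight Γ (.decl A S T) (1 + max m n)
  | sel {Γ x A T Γ₁ n} : LookupRest Γ x T Γ₁ → Weight Γ₁ T n →
      Weight Γ (.sel x A) (1 + n)
  | all {Γ x S T n} : Weight ((x, S) :: Γ) T n → Weight Γ (.all x S T) (1 + n)

/-- Recursive calls made by the Exposure algorithm. -/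
inductive ExposeCall : Env × Ty → Env × Ty → Prop where
  | lookup {Γ x A T} : lookupE Γ x = some T →
      ExposeCall (Γ, T) (Γ, .sel x A)
  | bound {Γ x A T S U} : lookupE Γ x = some T → Expose Γ T (.decl A S U) →
      ExposeCall (Γ, U) (Γ, .sel x A)

/-- Recursive calls made by the Promotion (true) / Demotion (false) algorithms. -/
inductive PDCall : Bool × Env × ℕ × Ty → Bool × Env × ℕ × Ty → Prop where
  | promoLamArg {Γ x y S T} : y ≠ x →
      PDCall (false, Γ, x, S) (true, Γ, x, .all y S T)
  | promoLamBody {Γ x y S S' T} : y ≠ x → Demo Γ S x S' →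
      PDCall (true, ((y, S') :: Γ), x, T) (true, Γ, x, .all y S T)
  | promoDeclLow {Γ x A L U} : PDCall (false, Γ, x, L) (true, Γ, x, .decl A L U)
  | promoDeclHigh {Γ x A L U} : PDCall (true, Γ, x, U) (true, Γ, x, .decl A L U)
  | demoLamArg {Γ x y S T} : y ≠ x →
      PDCall (true, Γ, x, S) (false, Γ, x, .all y S T)
  | demoLamBody {Γ x y S T} : y ≠ x →
      PDCall (false, ((y, S) :: Γ), x, T) (false, Γ, x, .all y S T)
  | demoDeclLow {Γ x A L U} : PDCall (true, Γ, x, L) (false, Γ, x, .decl A L U)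
  | demoDeclHigh {Γ x A L U} : PDCall (false, Γ, x, U) (false, Γ, x, .decl A L U)

/-- Recursive calls made by the Step Subtyping algorithm (premises of rules). -/
inductive SSubCall : Env × Ty × Ty → Env × Ty × Ty → Prop where
  | typLow {Γ A S₁ T₁ S₂ T₂} :
      SSubCall (Γ, S₂, S₁) (Γ, .decl A S₁ T₁, .decl A S₂ T₂)
  | typHigh {Γ A S₁ T₁ S₂ T₂} :
      SSubCall (Γ, T₁, T₂) (Γ, .decl A S₁ T₁, .decl A S₂ T₂)
  | selHigh {Γ x A T S₁ S₂ U} : lookupE Γ x = some T →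
      Expose Γ T (.decl A S₁ S₂) → SSubCall (Γ, S₂, U) (Γ, .sel x A, U)
  | selLow {Γ x A T S₁ S₂ U} : lookupE Γ x = some T →
      Expose Γ T (.decl A S₁ S₂) → SSubCall (Γ, U, S₁) (Γ, U, .sel x A)
  | all {Γ x S T₁ T₂} :
      SSubCall (((x, S) :: Γ), T₁, T₂) (Γ, .all x S T₁, .all x S T₂)

/-- B = {V: ⊤..⊤} (label V = 1). -/
def tyB : Ty := .decl 1 .top .top
/-- C = {Z: ⊤..⊤} (label Z = 2). -/
def tyC : Ty := .decl 2 .top .top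
/-- Γ⋆ = e : {E: ∀(b:B)B .. ∀(b:B)C}, with e = 0, E = 0, b = 1. -/
def GammaStar : Env := [(0, .decl 0 (.all 1 tyB tyB) (.all 1 tyB tyC))]

/-- The blue colour predicate: e.E is blue, and every function type is blue. -/
inductive Blue : Ty → Prop where
  | sel : Blue (.sel 0 0)
  | all {x S T} : Blue (.all x S T)

/-- The red colour predicate on type declarations. -/
inductive Red : Ty → Prop where
  | mk {A E₁ E₂} : (E₁ = Ty.bot ∨ Blue E₁) → (E₂ = Ty.top ∨ Blue E₂) →
      Red (.decl A E₁ E₂)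

/-! Exposing `x.A` moves on to the upper bound `U` of the declaration `{A : S..U}` exposed from
`Γ(x)`, and `weight(Γ, x.A) = 1 + weight(Γ(x)) ≥ 1 + weight({A : S..U}) > weight(U)`. The one
subtle point is that `Weight` measures `Γ(x)` in the context *preceding* `x`, while exposure works
in all of `Γ`; well-formedness makes the two agree, since a fresh binding never changes a weight. -/

namespace LookupRest

theorem lookupE_eq {Γ Γ₁ : Env} {x : ℕ} {T : Ty} (h : LookupRest Γ x T Γ₁) :
    lookupE Γ x = some T := by
  induction h with
  | here => simp [lookupE]
  | there hne _ ih => simp [lookupE, hne, ih]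

theorem unique {Γ Γ₁ Γ₂ : Env} {x : ℕ} {T₁ T₂ : Ty} (h₁ : LookupRest Γ x T₁ Γ₁)
    (h₂ : LookupRest Γ x T₂ Γ₂) : T₁ = T₂ ∧ Γ₁ = Γ₂ := by
  induction h₁ with
  | here =>
    cases h₂ with
    | here => exact ⟨rfl, rfl⟩
    | there hne _ => exact absurd rfl hne
  | there hne _ ih =>
    cases h₂ with
    | here => exact absurd rfl hne
    | there _ h₂ => exact ih h₂

theorem exists_append {Γ Γ₁ : Env} {x : ℕ} {T : Ty} (h : LookupRest Γ x T Γ₁) :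
    ∃ Γ₂, Γ = Γ₂ ++ Γ₁ := by
  induction h with
  | @here Γ x T => exact ⟨[(x, T)], rfl⟩
  | @there Γ x y T S Γ' _ _ ih =>
    obtain ⟨Γ₂, rfl⟩ := ih
    exact ⟨(y, S) :: Γ₂, rfl⟩

theorem insert {Γ₂ Γ₁ Γ' : Env} {z y : ℕ} {T S : Ty} (h : LookupRest (Γ₂ ++ Γ₁) z T Γ')
    (hy : lookupE Γ₁ y = none) :
    (∃ Γ₂', Γ' = Γ₂' ++ Γ₁ ∧ LookupRest (Γ₂ ++ (y, S) :: Γ₁) z T (Γ₂' ++ (y, S) :: Γ₁)) ∨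
      LookupRest (Γ₂ ++ (y, S) :: Γ₁) z T Γ' := by
  induction Γ₂ with
  | nil =>
    rw [List.nil_append] at h ⊢
    have hzy : z ≠ y := by
      rintro rfl
      simp [h.lookupE_eq] at hy
    exact Or.inr (.there hzy h)
  | cons p Γ₂ ih =>
    cases h with
    | here => exact Or.inl ⟨Γ₂, rfl, .here⟩
    | there hne h =>
      rcases ih h with ⟨Γ₂', rfl, h'⟩ | h'
      · exact Or.inl ⟨Γ₂', rfl, .there hne h'⟩
      · exact Or.inr (.there hne h')

end LookupRest

namespace Weight

theorem unique {Γ : Env} {T : Ty} {m n : ℕ} (hm : Weight Γ T m) (hn : Weight Γ T n) :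
    m = n := by
  induction hm generalizing n with
  | top => cases hn; rfl
  | bot => cases hn; rfl
  | decl _ _ ihS ihT => cases hn with | decl hS hT => rw [ihS hS, ihT hT]
  | sel hx _ ih =>
    cases hn with
    | sel hx' hT =>
      obtain ⟨rfl, rfl⟩ := hx.unique hx'
      rw [ih hT]
  | all _ ih => cases hn with | all hT => rw [ih hT]

theorem insert {Γ₂ Γ₁ : Env} {T S : Ty} {y n : ℕ} (h : Weight (Γ₂ ++ Γ₁) T n)
    (hy : lookupE Γ₁ y = none) : Weight (Γ₂ ++ (y, S) :: Γ₁) T n := by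
  generalize hΓ : Γ₂ ++ Γ₁ = Γ at h
  induction h generalizing Γ₂ with
  | top => exact .top
  | bot => exact .bot
  | decl _ _ ihS ihT => exact .decl (ihS hΓ) (ihT hΓ)
  | sel hz hT ih =>
    subst hΓ
    rcases hz.insert hy with ⟨Γ₂', rfl, hz'⟩ | hz'
    · exact .sel hz' (ih rfl)
    · exact .sel hz' hT
  | @all _ x S' _ _ _ ih =>
    subst hΓ
    exact .all (ih (Γ₂ := (x, S') :: Γ₂) rfl)

theorem weaken {Γ₂ Γ₁ : Env} {T : Ty} {n : ℕ} (hwf : WfEnv (Γ₂ ++ Γ₁)) (h : Weight Γ₁ T n) :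
    Weight (Γ₂ ++ Γ₁) T n := by
  induction Γ₂ with
  | nil => exact h
  | cons p Γ₂ ih =>
    cases hwf with
    | cons hwf hy _ => exact insert (Γ₂ := []) (ih hwf) hy

theorem exists_of_sel {Γ : Env} {x A m : ℕ} {T : Ty} (hwf : WfEnv Γ) (h : Weight Γ (.sel x A) m)
    (hx : lookupE Γ x = some T) : ∃ n, Weight Γ T n ∧ m = 1 + n := by
  cases h with
  | sel hx' hT =>
    obtain ⟨Γ₂, rfl⟩ := hx'.exists_append
    rw [hx'.lookupE_eq, Option.some_inj] at hx
    subst hx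
    exact ⟨_, hT.weaken hwf, rfl⟩

end Weight

theorem Expose.exists_weight_le {Γ : Env} {T T' : Ty} {m : ℕ} (hwf : WfEnv Γ)
    (h : Expose Γ T T') (hT : Weight Γ T m) : ∃ n ≤ m, Weight Γ T' n := by
  induction h generalizing m with
  | bot => cases hT; exact ⟨1, by omega, .bot⟩
  | path hx _ _ ihT ihU =>
    obtain ⟨n, hwT, rfl⟩ := hT.exists_of_sel hwf hx
    obtain ⟨_, hle, hwD⟩ := ihT hwT
    cases hwD with
    | decl _ hwU =>
      obtain ⟨k, hk, hwV⟩ := ihU hwU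
      exact ⟨k, by omega, hwV⟩
  | other => exact ⟨m, le_rfl, hT⟩

/-- Monotonicity of Exposure with respect to weight. -/
theorem exposure_weight_mono {Γ : Env} {T T' : Ty} {m n : ℕ}
    (hwf : WfEnv Γ) (h : Expose Γ T T')
    (hT : Weight Γ T m) (hT' : Weight Γ T' n) : n ≤ m := by
  obtain ⟨k, hk, hwk⟩ := h.exists_weight_le hwf hT
  exact hT'.unique hwk ▸ hk
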